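/- arXiv:2503.05654 — 2 statements merged into one kernel-verified Lean document; each statement's English description precedes it below -/
import Mathlib

section
/- Let {τ_j}_{j=1}^n be unit vectors in ℝ^d with ⟨τ_j, τ_k⟩ ≤ cos θ for all j ≠ k. Let c > 0 and φ : [-1,1] → ℝ satisfy ∑_{j,k} φ(⟨τ_j, τ_k⟩) ≥ 0, φ(r) + c ≤ 0 for all r ∈ [-1, cos θ], and φ(1) + c ≤ 1. Then n ≤ 1/c. -/
open scoped RealInnerProductSpace

theorem pfender_bound_normalized (d n : ℕ) (θ : ℝ)
    (τ : Fin n → EuclideanSpace ℝ (Fin d))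
    (hunit : ∀ j, ‖τ j‖ = 1)
    (hcode : ∀ j k, j ≠ k → ⟪τ j, τ k⟫ ≤ Real.cos θ)
    (c : ℝ) (hc : 0 < c) (φ : ℝ → ℝ)
    (hsum : 0 ≤ ∑ j : Fin n, ∑ k : Fin n, φ ⟪τ j, τ k⟫)
    (hφ : ∀ r : ℝ, -1 ≤ r → r ≤ Real.cos θ → φ r + c ≤ 0)
    (hnorm : φ 1 + c ≤ 1) :
    (n : ℝ) ≤ 1 / c := by
  rcases Nat.eq_zero_or_pos n with h0 | hpos
  · subst h0
    simp
    positivity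
  have key : (0:ℝ) ≤ (n:ℝ) - (n:ℝ)^2 * c := by
    calc (0:ℝ) ≤ ∑ j : Fin n, ∑ k : Fin n, φ ⟪τ j, τ k⟫ := hsum
    _ ≤ ∑ j : Fin n, ∑ k : Fin n, (-c + if j = k then (1:ℝ) else 0) := by
        apply Finset.sum_le_sum; intro j _
        apply Finset.sum_le_sum; intro k _
        by_cases h : j = k
        · subst h
          simp only [if_pos rfl]
          have h1 : ⟪τ j, τ j⟫ = 1 := by
            rw [real_inner_self_eq_norm_sq, hunit]; norm_num
          rw [h1]; simp; linarith
        · simp only [if_neg h]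
          have hle := hcode j k h
          have hge : -1 ≤ ⟪τ j, τ k⟫ := by
            have h2 := abs_real_inner_le_norm (τ j) (τ k)
            rw [hunit, hunit] at h2
            rw [one_mul] at h2
            exact (abs_le.mp h2).1
          linarith [hφ _ hge hle]
    _ = (n:ℝ) - (n:ℝ)^2 * c := by
        simp [Finset.sum_add_distrib, Finset.sum_ite_eq, Finset.mul_sum]
        ring
  rw [le_div_iff₀ hc]
  have hn : (0:ℝ) < n := by exact_mod_cast hpos
  nlinarith
end

section
/- Let {τ_j}_{j=1}^n be a p-adic (d,n,θ)-spherical code in ℚ_p^d, let c > 0 and φ : [0,∞) → ℝ satisfy ∑_{j,k} φ(|2 - 2⟨τ_j, τ_k⟩|_p) ≥ 0, φ(r) + c ≤ 0 for all r ≥ 2(1 - cos θ), and φ(0) + c ≤ 1. Then n ≤ 1/c. -/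
/-- The standard bilinear form on the p-adic Hilbert space `ℚ_p^d`. -/
noncomputable def padicInner {p : ℕ} [Fact p.Prime] {d : ℕ} (x y : Fin d → ℚ_[p]) : ℚ_[p] :=
  ∑ i, x i * y i

/-- p-adic Pfender bound, normalized form: if moreover `φ(0) + c ≤ 1` then `n ≤ 1/c`. -/
theorem padic_pfender_bound_normalized (p : ℕ) [Fact p.Prime] (d n : ℕ) (θ : ℝ)
    (τ : Fin n → (Fin d → ℚ_[p]))
    (hunit : ∀ j, ‖τ j‖ = 1)
    (hdiag : ∀ j, padicInner (τ j) (τ j) = 1)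
    (hcode : ∀ j k, j ≠ k → 2 * (1 - Real.cos θ) ≤ ‖2 - 2 * padicInner (τ j) (τ k)‖)
    (c : ℝ) (hc : 0 < c) (φ : ℝ → ℝ)
    (hsum : 0 ≤ ∑ j : Fin n, ∑ k : Fin n, φ ‖2 - 2 * padicInner (τ j) (τ k)‖)
    (hφ : ∀ r : ℝ, 2 * (1 - Real.cos θ) ≤ r → φ r + c ≤ 0)
    (hnorm : φ 0 + c ≤ 1) :
    (n : ℝ) ≤ 1 / c := by
  rcases Nat.eq_zero_or_pos n with h0 | hn
  · subst h0; simp; positivity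
  have hbound : ∀ j k : Fin n, φ ‖2 - 2 * padicInner (τ j) (τ k)‖ ≤
      if j = k then φ 0 else -c := by
    intro j k
    by_cases h : j = k
    · subst h
      have : ‖(2 : ℚ_[p]) - 2 * padicInner (τ j) (τ j)‖ = 0 := by
        rw [hdiag j]; norm_num
      simp [this]
    · simp only [h, if_false]
      linarith [hφ _ (hcode j k h)]
  have hS : ∑ j : Fin n, ∑ k : Fin n, φ ‖2 - 2 * padicInner (τ j) (τ k)‖ ≤
      ∑ j : Fin n, ∑ k : Fin n, (if j = k then φ 0 else -c) := by
    apply Finset.sum_le_sum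
    intro j _
    exact Finset.sum_le_sum fun k _ => hbound j k
  have hval : ∑ j : Fin n, ∑ k : Fin n, (if j = k then φ 0 else -c)
      = n * (φ 0 + c) - n ^ 2 * c := by
    have inner : ∀ j : Fin n, ∑ k : Fin n, (if j = k then φ 0 else -c)
        = (φ 0 + c) - n * c := by
      intro j
      have : ∀ k : Fin n, (if j = k then φ 0 else -c)
          = (if j = k then φ 0 + c else 0) + (-c) := by
        intro k; by_cases h : j = k <;> simp [h]
      rw [Finset.sum_congr rfl fun k _ => this k, Finset.sum_add_distrib,
        Finset.sum_ite_eq, Finset.sum_const]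
      simp; ring
    rw [Finset.sum_congr rfl fun j _ => inner j, Finset.sum_sub_distrib,
      Finset.sum_const, Finset.sum_const]
    simp; ring
  rw [le_div_iff₀ hc]
  have hn1 : (1 : ℝ) ≤ n := by exact_mod_cast hn
  nlinarith [hsum.trans (hS.trans_eq hval)]
end
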